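/- arXiv:1907.02447 — 2 statements merged into one kernel-verified Lean document; each statement's English description precedes it below -/
import Mathlib

section
/- Let n ∈ (ℕ_{>0})^d, let g be a modulation on J_n, let f : ℝ^d → ℝ be integrable on [0,2π)^d and 2π-periodic in each coordinate, and let (X_s)_{s∈J_n} be real square-integrable mean-zero random variables with E[X_s X_t] = ∫_{[0,2π)^d} f(ω) exp(i ω·(t−s)) dω for all s, t ∈ J_n. Then for every ω ∈ ℝ^d, E[I_n(ω)] = ∫_{[0,2π)^d} f(ω − ω') F_n(ω') dω', i.e. the expected periodogram is the convolution of f with the modified Fejér kernel. -/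
/-!
Expanding `‖∑ c_s X_s‖²` with `c_s = g_s e^{-iω·s}` and taking expectations gives the Hermitian
form `∑ conj(c_s) c_t E[X_s X_t]`. Inserting the spectral representation of the covariances turns
it into `∫ f(λ) ‖∑ c_t e^{iλ·t}‖² dλ`, that is `∫_{[0,2π)^d} f(λ) F_n(λ - ω) dλ`. Finally
`λ ↦ ω - λ` maps `[0,2π)^d` onto another fundamental domain of `2πℤ^d`; as `f` and `F_n` are
periodic and `F_n` is even, this is the convolution.
-/

open MeasureTheory Real Filter Topology BigOperators NNReal

noncomputable section

namespace DSW

/-- The rectangular grid `J_n ⊆ ℤ^d`. -/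
def grid {d : ℕ} (n : Fin d → ℕ+) : Finset (Fin d → ℤ) :=
  Fintype.piFinset fun i => Finset.Icc 0 ((n i : ℤ) - 1)

/-- `|n| = ∏ n_i` as a real number. -/
def gridSize {d : ℕ} (n : Fin d → ℕ+) : ℝ := ∏ i, ((n i : ℕ) : ℝ)

/-- A modulation on `J_n`: takes values in `[0,1]`, vanishes off the grid,
and is not identically zero. -/
def IsModulation {d : ℕ} (n : Fin d → ℕ+) (g : (Fin d → ℤ) → ℝ) : Prop :=
  (∀ s, 0 ≤ g s ∧ g s ≤ 1) ∧ (∀ s, s ∉ grid n → g s = 0) ∧ ∃ s, g s ≠ 0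

/-- `c_{g,n}(u) = (∑_{s∈ℤ^d} g_s g_{s+u}) / (∑_{s∈ℤ^d} g_s²)`. -/
def cg {d : ℕ} (g : (Fin d → ℤ) → ℝ) (u : Fin d → ℤ) : ℝ :=
  (∑' s : Fin d → ℤ, g s * g (s + u)) / ∑' s : Fin d → ℤ, g s ^ 2

/-- `ω · s` for `ω ∈ ℝ^d`, `s ∈ ℤ^d`. -/
def dotZ {d : ℕ} (ω : Fin d → ℝ) (s : Fin d → ℤ) : ℝ := ∑ i, ω i * (s i : ℝ)

/-- The modulated periodogram `I_n(ω)`. -/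
def periodogram {d : ℕ} (n : Fin d → ℕ+) (g X : (Fin d → ℤ) → ℝ) (ω : Fin d → ℝ) : ℝ :=
  ((2 * π) ^ d)⁻¹ * (∑' s : Fin d → ℤ, g s ^ 2)⁻¹ *
    ‖∑ s ∈ grid n, ((g s * X s : ℝ) : ℂ) *
      Complex.exp (-(Complex.I * (dotZ ω s : ℂ)))‖ ^ 2

/-- The modified Fejér kernel `F_n(ω)`. -/
def fejer {d : ℕ} (n : Fin d → ℕ+) (g : (Fin d → ℤ) → ℝ) (ω : Fin d → ℝ) : ℝ :=
  ((2 * π) ^ d)⁻¹ * (∑' s : Fin d → ℤ, g s ^ 2)⁻¹ *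
    ‖∑ s ∈ grid n, (g s : ℂ) * Complex.exp (Complex.I * (dotZ ω s : ℂ))‖ ^ 2

/-- The torus `[0, 2π)^d`. -/
def torus (d : ℕ) : Set (Fin d → ℝ) := Set.univ.pi fun _ => Set.Ico 0 (2 * π)

/-- `2π`-periodicity in each coordinate. -/
def Periodic2Pi {d : ℕ} (f : (Fin d → ℝ) → ℝ) : Prop :=
  ∀ (ω : Fin d → ℝ) (u : Fin d → ℤ), f (fun i => ω i + 2 * π * (u i : ℝ)) = f ω

/-- The expected periodogram `Ī_n(ω; f) = ∫_{[0,2π)^d} f(ω-λ) F_n(λ) dλ`. -/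
def expPeriodogram {d : ℕ} (n : Fin d → ℕ+) (g : (Fin d → ℤ) → ℝ)
    (f : (Fin d → ℝ) → ℝ) (ω : Fin d → ℝ) : ℝ :=
  ∫ lam in torus d, f (ω - lam) * fejer n g lam

/-- The Fourier grid `Ω_n`. -/
def fourierGrid {d : ℕ} (n : Fin d → ℕ+) : Finset (Fin d → ℝ) :=
  (Fintype.piFinset fun i => Finset.range (n i : ℕ)).image
    fun k i => 2 * π * (k i : ℝ) / ((n i : ℕ) : ℝ)

/-- A family of real random variables is jointly Gaussian and centered if every finite
real linear combination has a (possibly degenerate) centered Gaussian distribution. -/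
def IsJointlyGaussianCentered {Ω : Type*} [MeasurableSpace Ω] (μ : Measure Ω)
    {S : Type*} (X : S → Ω → ℝ) : Prop :=
  ∀ (T : Finset S) (a : S → ℝ), ∃ v : ℝ≥0,
    Measure.map (fun x => ∑ s ∈ T, a s * X s x) μ = ProbabilityTheory.gaussianReal 0 v

section Quadratic

open ComplexConjugate

variable {ι α : Type*}

theorem ofReal_norm_sq_sum_mul (J : Finset ι) (c z : ι → ℂ) :
    ((‖∑ s ∈ J, c s * z s‖ ^ 2 : ℝ) : ℂ) =
      ∑ s ∈ J, ∑ t ∈ J, conj (c s) * c t * (conj (z s) * z t) := by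
  rw [Complex.ofReal_pow, ← Complex.conj_mul', map_sum, Finset.sum_mul_sum]
  refine Finset.sum_congr rfl fun s _ => Finset.sum_congr rfl fun t _ => ?_
  rw [map_mul]
  ring

theorem integral_sum_sum_const_mul [MeasurableSpace α] {μ : Measure α} (J : Finset ι)
    (b : ι → ι → ℂ) {F : ι → ι → α → ℂ} (hF : ∀ s ∈ J, ∀ t ∈ J, Integrable (F s t) μ) :
    ∫ x, ∑ s ∈ J, ∑ t ∈ J, b s t * F s t x ∂μ = ∑ s ∈ J, ∑ t ∈ J, b s t * ∫ x, F s t x ∂μ := by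
  rw [integral_finsetSum _ fun s hs =>
    integrable_finsetSum _ fun t ht => (hF s hs t ht).const_mul _]
  refine Finset.sum_congr rfl fun s hs => ?_
  rw [integral_finsetSum _ fun t ht => (hF s hs t ht).const_mul _]
  exact Finset.sum_congr rfl fun t _ => integral_const_mul _ _

theorem ofReal_integral_norm_sq_sum_mul [MeasurableSpace α] {μ : Measure α} (J : Finset ι)
    (c : ι → ℂ) {Y : ι → α → ℝ} (hY : ∀ s ∈ J, MemLp (Y s) 2 μ) :
    ((∫ x, ‖∑ s ∈ J, c s * Y s x‖ ^ 2 ∂μ : ℝ) : ℂ) =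
      ∑ s ∈ J, ∑ t ∈ J, conj (c s) * c t * ((∫ x, Y s x * Y t x ∂μ : ℝ) : ℂ) := by
  rw [← integral_complex_ofReal]
  simp_rw [ofReal_norm_sq_sum_mul, Complex.conj_ofReal, ← Complex.ofReal_mul]
  rw [integral_sum_sum_const_mul J _ (F := fun s t x => ((Y s x * Y t x : ℝ) : ℂ))
    fun s hs t ht => ((hY s hs).integrable_mul (hY t ht)).ofReal]
  simp_rw [integral_complex_ofReal]

theorem ofReal_integral_mul_norm_sq_sum_mul [MeasurableSpace α] {ν : Measure α} (J : Finset ι)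
    (c : ι → ℂ) {f : α → ℝ} (hf : Integrable f ν) {z : ι → α → ℂ}
    (hz : ∀ s ∈ J, AEStronglyMeasurable (z s) ν) (hz1 : ∀ s ∈ J, ∀ a, ‖z s a‖ ≤ 1) :
    ((∫ a, f a * ‖∑ s ∈ J, c s * z s a‖ ^ 2 ∂ν : ℝ) : ℂ) =
      ∑ s ∈ J, ∑ t ∈ J, conj (c s) * c t * ∫ a, (f a : ℂ) * (conj (z s a) * z t a) ∂ν := by
  have hint : ∀ s ∈ J, ∀ t ∈ J,
      Integrable (fun a => (f a : ℂ) * (conj (z s a) * z t a)) ν := by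
    intro s hs t ht
    refine hf.ofReal.mul_bdd (c := 1) ((hz s hs).star.mul (hz t ht)) (.of_forall fun a => ?_)
    rw [norm_mul, Complex.norm_conj]
    exact mul_le_one₀ (hz1 s hs a) (norm_nonneg _) (hz1 t ht a)
  rw [← integral_complex_ofReal, ← integral_sum_sum_const_mul J _ hint]
  simp_rw [Complex.ofReal_mul, ofReal_norm_sq_sum_mul, Finset.mul_sum, mul_left_comm]

end Quadratic

theorem _root_.MeasureTheory.IsAddFundamentalDomain.setIntegral_comp_sub_left {E F : Type*}
    [AddCommGroup E] [MeasurableSpace E] [MeasurableAdd E] [MeasurableNeg E] {μ : Measure E}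
    [μ.IsAddLeftInvariant] [μ.IsNegInvariant] [NormedAddCommGroup F] [NormedSpace ℝ F]
    {L : AddSubgroup E} [Countable L] {s : Set E} (hs : IsAddFundamentalDomain L s μ)
    {H : E → F} (hH : ∀ v ∈ L, ∀ x, H (v + x) = H x) (ω : E) :
    ∫ x in s, H (ω - x) ∂μ = ∫ x in s, H x ∂μ := by
  have hrefl : IsAddFundamentalDomain L ((ω - ·) ⁻¹' s) μ :=
    hs.preimage_of_equiv (Measure.measurePreserving_sub_left μ ω).quasiMeasurePreserving
      neg_bijective fun v x => by
        change ω - (-(v : E) + x) = (v : E) + (ω - x)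
        abel
  calc ∫ x in s, H (ω - x) ∂μ = ∫ x in (ω - ·) ⁻¹' s, H (ω - x) ∂μ :=
        hs.setIntegral_eq hrefl fun v x => by
          change H (ω - ((v : E) + x)) = H (ω - x)
          rw [sub_add_eq_sub_sub_swap, sub_eq_neg_add, hH _ (neg_mem v.2)]
    _ = ∫ x in s, H x ∂μ :=
        (Measure.measurePreserving_sub_left μ ω).setIntegral_preimage_emb
          (measurableEmbedding_subLeft ω) H s

section Torus

variable {d : ℕ}

def torusBasis (d : ℕ) : Module.Basis (Fin d) ℝ (Fin d → ℝ) :=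
  (Pi.basisFun ℝ (Fin d)).unitsSMul fun _ => Units.mk0 (2 * π) two_pi_pos.ne'

abbrev torusLattice (d : ℕ) : AddSubgroup (Fin d → ℝ) :=
  (Submodule.span ℤ (Set.range (torusBasis d))).toAddSubgroup

instance (d : ℕ) : Countable (torusLattice d) :=
  inferInstanceAs (Countable (Submodule.span ℤ (Set.range (torusBasis d))))

theorem torusBasis_repr (x : Fin d → ℝ) (i : Fin d) :
    (torusBasis d).repr x i = x i / (2 * π) := by
  rw [torusBasis, Module.Basis.repr_unitsSMul, Units.smul_def, Units.val_inv_eq_inv_val,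
    Units.val_mk0, Pi.basisFun_repr, smul_eq_mul, inv_mul_eq_div]

theorem torus_eq_fundamentalDomain : torus d = ZSpan.fundamentalDomain (torusBasis d) := by
  ext x
  simp only [torus, ZSpan.fundamentalDomain, Set.mem_pi, Set.mem_univ, true_implies,
    Set.mem_ofPred_eq, torusBasis_repr, Set.mem_Ico, le_div_iff₀ two_pi_pos, zero_mul,
    div_lt_one two_pi_pos]

theorem isAddFundamentalDomain_torus :
    IsAddFundamentalDomain (torusLattice d) (torus d) volume := by
  rw [torus_eq_fundamentalDomain]
  exact ZSpan.isAddFundamentalDomain' (torusBasis d) volume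

theorem Periodic2Pi.add_of_mem_torusLattice {f : (Fin d → ℝ) → ℝ} (hf : Periodic2Pi f)
    {v : Fin d → ℝ} (hv : v ∈ torusLattice d) (x : Fin d → ℝ) : f (v + x) = f x := by
  rw [Submodule.mem_toAddSubgroup, Module.Basis.mem_span_iff_repr_mem] at hv
  choose u hu using hv
  convert hf x u using 2
  ext i
  have := hu i
  simp only [torusBasis_repr, algebraMap_int_eq, eq_intCast] at this
  rw [Pi.add_apply, add_comm, this]
  field_simp

end Torus

section Spectral

open ComplexConjugate

variable {d : ℕ}

theorem dotZ_sub_left (x y : Fin d → ℝ) (s : Fin d → ℤ) :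
    dotZ (x - y) s = dotZ x s - dotZ y s := by
  simp only [dotZ, Pi.sub_apply, sub_mul, Finset.sum_sub_distrib]

theorem dotZ_sub_right (x : Fin d → ℝ) (s t : Fin d → ℤ) :
    dotZ x (s - t) = dotZ x s - dotZ x t := by
  simp only [dotZ, Pi.sub_apply, Int.cast_sub, mul_sub, Finset.sum_sub_distrib]

theorem dotZ_neg_left (x : Fin d → ℝ) (s : Fin d → ℤ) : dotZ (-x) s = -dotZ x s := by
  simp [dotZ, Finset.sum_neg_distrib]

theorem dotZ_add_two_pi_mul (x : Fin d → ℝ) (u s : Fin d → ℤ) :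
    dotZ (fun i => x i + 2 * π * (u i : ℝ)) s =
      dotZ x s + ((∑ i, u i * s i : ℤ) : ℝ) * (2 * π) := by
  simp only [dotZ, add_mul, Finset.sum_add_distrib, Int.cast_sum, Int.cast_mul, Finset.sum_mul]
  congr 1
  exact Finset.sum_congr rfl fun i _ => by ring

theorem cexp_I_mul_dotZ_add_two_pi_mul (x : Fin d → ℝ) (u s : Fin d → ℤ) :
    Complex.exp (Complex.I * (dotZ (fun i => x i + 2 * π * (u i : ℝ)) s : ℂ)) =
      Complex.exp (Complex.I * (dotZ x s : ℂ)) := by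
  rw [dotZ_add_two_pi_mul, Complex.ofReal_add, mul_add, Complex.exp_add]
  convert mul_one _
  convert Complex.exp_int_mul_two_pi_mul_I (∑ i, u i * s i) using 2
  push_cast
  ring

theorem conj_cexp_I_mul (θ : ℝ) :
    conj (Complex.exp (Complex.I * θ)) = Complex.exp (-(Complex.I * θ)) := by
  rw [← Complex.exp_conj, map_mul, Complex.conj_I, Complex.conj_ofReal, neg_mul]

theorem cexp_I_mul_dotZ_sub (x : Fin d → ℝ) (s t : Fin d → ℤ) :
    Complex.exp (Complex.I * (dotZ x (t - s) : ℂ)) =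
      conj (Complex.exp (Complex.I * (dotZ x s : ℂ))) *
        Complex.exp (Complex.I * (dotZ x t : ℂ)) := by
  rw [conj_cexp_I_mul, ← Complex.exp_add, dotZ_sub_right]
  push_cast
  ring_nf

theorem continuous_cexp_I_mul_dotZ (s : Fin d → ℤ) :
    Continuous fun x : Fin d → ℝ => Complex.exp (Complex.I * (dotZ x s : ℂ)) := by
  unfold dotZ
  fun_prop

theorem integral_norm_sq_sum_mul_of_spectral {ν : Measure (Fin d → ℝ)} {f : (Fin d → ℝ) → ℝ}
    (hf : Integrable f ν) {Ω : Type*} [MeasurableSpace Ω] {μ : Measure Ω} {J : Finset (Fin d → ℤ)}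
    (c : (Fin d → ℤ) → ℂ) {X : (Fin d → ℤ) → Ω → ℝ} (hX2 : ∀ s ∈ J, MemLp (X s) 2 μ)
    (hcov : ∀ s ∈ J, ∀ t ∈ J, ((∫ x, X s x * X t x ∂μ : ℝ) : ℂ) =
      ∫ l, (f l : ℂ) * Complex.exp (Complex.I * (dotZ l (t - s) : ℂ)) ∂ν) :
    ∫ x, ‖∑ s ∈ J, c s * X s x‖ ^ 2 ∂μ =
      ∫ l, f l * ‖∑ s ∈ J, c s * Complex.exp (Complex.I * (dotZ l s : ℂ))‖ ^ 2 ∂ν := by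
  apply Complex.ofReal_injective
  rw [ofReal_integral_norm_sq_sum_mul _ c hX2, ofReal_integral_mul_norm_sq_sum_mul _ c hf
    (fun s _ => (continuous_cexp_I_mul_dotZ s).aestronglyMeasurable)
    (fun s _ x => (Complex.norm_exp_I_mul_ofReal _).le)]
  refine Finset.sum_congr rfl fun s hs => Finset.sum_congr rfl fun t ht => ?_
  simp_rw [hcov s hs t ht, cexp_I_mul_dotZ_sub]

theorem fejer_neg (n : Fin d → ℕ+) (g : (Fin d → ℤ) → ℝ) (x : Fin d → ℝ) :
    fejer n g (-x) = fejer n g x := by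
  have hconj : ∑ s ∈ grid n, (g s : ℂ) * Complex.exp (Complex.I * (dotZ (-x) s : ℂ)) =
      conj (∑ s ∈ grid n, (g s : ℂ) * Complex.exp (Complex.I * (dotZ x s : ℂ))) := by
    simp only [map_sum, map_mul, Complex.conj_ofReal, conj_cexp_I_mul, dotZ_neg_left,
      Complex.ofReal_neg, mul_neg]
  rw [fejer, fejer, hconj, Complex.norm_conj]

theorem periodic2Pi_fejer (n : Fin d → ℕ+) (g : (Fin d → ℤ) → ℝ) : Periodic2Pi (fejer n g) := by
  intro x u
  simp only [fejer, cexp_I_mul_dotZ_add_two_pi_mul]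

theorem fejer_sub (n : Fin d → ℕ+) (g : (Fin d → ℤ) → ℝ) (x ω : Fin d → ℝ) :
    fejer n g (x - ω) = ((2 * π) ^ d)⁻¹ * (∑' s : Fin d → ℤ, g s ^ 2)⁻¹ *
      ‖∑ s ∈ grid n, (g s * Complex.exp (-(Complex.I * (dotZ ω s : ℂ)))) *
        Complex.exp (Complex.I * (dotZ x s : ℂ))‖ ^ 2 := by
  rw [fejer]
  congr 3
  refine Finset.sum_congr rfl fun s _ => ?_
  rw [dotZ_sub_left, mul_assoc, ← Complex.exp_add]
  push_cast
  ring_nf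

theorem periodogram_eq (n : Fin d → ℕ+) (g Y : (Fin d → ℤ) → ℝ) (ω : Fin d → ℝ) :
    periodogram n g Y ω = ((2 * π) ^ d)⁻¹ * (∑' s : Fin d → ℤ, g s ^ 2)⁻¹ *
      ‖∑ s ∈ grid n, (g s * Complex.exp (-(Complex.I * (dotZ ω s : ℂ)))) * Y s‖ ^ 2 := by
  rw [periodogram]
  congr 3
  exact Finset.sum_congr rfl fun s _ => by push_cast; ring

end Spectral

theorem expected_periodogram_eq_convolution_general
    {d : ℕ} (n : Fin d → ℕ+) (g : (Fin d → ℤ) → ℝ)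
    (f : (Fin d → ℝ) → ℝ)
    (hfint : IntegrableOn f (torus d)) (hfper : Periodic2Pi f)
    {Ω : Type*} [MeasurableSpace Ω] (μ : Measure Ω)
    (X : (Fin d → ℤ) → Ω → ℝ)
    (hX2 : ∀ s ∈ grid n, MemLp (X s) 2 μ)
    (hcov : ∀ s ∈ grid n, ∀ t ∈ grid n,
      ((∫ x, X s x * X t x ∂μ : ℝ) : ℂ) =
        ∫ ω in torus d, (f ω : ℂ) * Complex.exp (Complex.I * (dotZ ω (t - s) : ℂ))) :
    ∀ ω : Fin d → ℝ,
      ∫ x, periodogram n g (fun s => X s x) ω ∂μ = expPeriodogram n g f ω := by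
  intro ω
  set C := ((2 * π) ^ d)⁻¹ * (∑' s : Fin d → ℤ, g s ^ 2)⁻¹
  set c : (Fin d → ℤ) → ℂ := fun s => g s * Complex.exp (-(Complex.I * (dotZ ω s : ℂ)))
  have hperiodic : ∀ v ∈ torusLattice d, ∀ x,
      f (v + x) * fejer n g (v + x - ω) = f x * fejer n g (x - ω) := fun v hv x => by
    rw [add_sub_assoc, hfper.add_of_mem_torusLattice hv,
      (periodic2Pi_fejer n g).add_of_mem_torusLattice hv]
  calc ∫ x, periodogram n g (fun s => X s x) ω ∂μ
      = C * ∫ x, ‖∑ s ∈ grid n, c s * X s x‖ ^ 2 ∂μ := by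
        simp_rw [periodogram_eq]
        exact integral_const_mul _ _
    _ = ∫ x in torus d, f x * fejer n g (x - ω) := by
        rw [integral_norm_sq_sum_mul_of_spectral hfint c hX2 hcov]
        simp_rw [fejer_sub, ← integral_const_mul]
        exact integral_congr_ae (.of_forall fun x => by ring)
    _ = ∫ x in torus d, f (ω - x) * fejer n g (ω - x - ω) :=
        (isAddFundamentalDomain_torus.setIntegral_comp_sub_left
          (H := fun x => f x * fejer n g (x - ω)) hperiodic ω).symm
    _ = expPeriodogram n g f ω := by
        simp_rw [sub_sub_cancel_left, fejer_neg]
        rfl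

/-- the expected periodogram is the convolution of the spectral density
with the modified Fejér kernel. -/
theorem expected_periodogram_eq_convolution
    {d : ℕ} (n : Fin d → ℕ+) (g : (Fin d → ℤ) → ℝ) (hg : IsModulation n g)
    (f : (Fin d → ℝ) → ℝ)
    (hfint : IntegrableOn f (torus d)) (hfper : Periodic2Pi f)
    {Ω : Type*} [MeasurableSpace Ω] (μ : Measure Ω) [IsProbabilityMeasure μ]
    (X : (Fin d → ℤ) → Ω → ℝ)
    (hX2 : ∀ s ∈ grid n, MemLp (X s) 2 μ)
    (hmean : ∀ s ∈ grid n, ∫ x, X s x ∂μ = 0)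
    (hcov : ∀ s ∈ grid n, ∀ t ∈ grid n,
      ((∫ x, X s x * X t x ∂μ : ℝ) : ℂ) =
        ∫ ω in torus d, (f ω : ℂ) * Complex.exp (Complex.I * (dotZ ω (t - s) : ℂ))) :
    ∀ ω : Fin d → ℝ,
      ∫ x, periodogram n g (fun s => X s x) ω ∂μ = expPeriodogram n g f ω :=
  expected_periodogram_eq_convolution_general n g f hfint hfper μ X hX2 hcov

end DSW
end
end

section
/- Let S be a finite nonempty set, let (X_s)_{s∈S} be jointly Gaussian, centered, square-integrable real random variables, and let (a_s)_{s∈S} be real numbers. Then Var( ∑_{s∈S} a_s X_s² ) = 2 ∑_{s∈S} ∑_{t∈S} a_s a_t ( E[X_s X_t] )². -/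
open MeasureTheory Real Filter Topology BigOperators NNReal

noncomputable section

namespace DSW

/-! The variance of `∑ a_s X_s²` is `∑_{s,t} a_s a_t cov(X_s², X_t²)`, so everything reduces to
`E[X_s² X_t²] = E[X_s²] E[X_t²] + 2 E[X_s X_t]²`. Every `a X_s + b X_t` is centered Gaussian, and
the fourth moment of `N(0, v)` is `3 v²` (the fourth derivative at `0` of its moment generating
function `exp (v t² / 2)`), so `E[(a X_s + b X_t)⁴] = 3 E[(a X_s + b X_t)²]²` for all `a, b`.
Polarizing `y² z² = ((y + z)⁴ + (y - z)⁴ - 2 y⁴ - 2 z⁴) / 12` turns these identities into the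
product formula. -/

open ProbabilityTheory
open scoped ENNReal

lemma hasDerivAt_mul_exp_mul_sq_div_two (c : ℝ) {p : ℝ → ℝ} {p' t : ℝ} (hp : HasDerivAt p p' t) :
    HasDerivAt (fun t => p t * rexp (c * t ^ 2 / 2))
      ((p' + c * t * p t) * rexp (c * t ^ 2 / 2)) t := by
  have h : HasDerivAt (fun t => c * t ^ 2 / 2) (c * t) t :=
    (((hasDerivAt_pow 2 t).const_mul c).div_const 2).congr_deriv (by ring)
  exact (hp.mul h.exp).congr_deriv (by ring)

lemma iteratedDeriv_four_exp_mul_sq_div_two_zero (c : ℝ) :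
    iteratedDeriv 4 (fun t => rexp (c * t ^ 2 / 2)) 0 = 3 * c ^ 2 := by
  set E : ℝ → ℝ := fun t => rexp (c * t ^ 2 / 2)
  have step : ∀ {p p' : ℝ → ℝ}, (∀ t, HasDerivAt p (p' t) t) →
      deriv (fun t => p t * E t) = fun t => (p' t + c * t * p t) * E t := fun hp =>
    funext fun t => (hasDerivAt_mul_exp_mul_sq_div_two c (hp t)).deriv
  have d1 : deriv E = fun t => c * t * E t := by
    simpa using step (p' := fun _ => 0) fun t => hasDerivAt_const t 1
  have d2 : deriv (fun t => c * t * E t) = fun t => (c + c ^ 2 * t ^ 2) * E t := by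
    rw [step (p' := fun _ => c) fun t => ((hasDerivAt_id' t).const_mul c).congr_deriv (mul_one c)]
    ext t; ring
  have d3 : deriv (fun t => (c + c ^ 2 * t ^ 2) * E t)
      = fun t => (3 * c ^ 2 * t + c ^ 3 * t ^ 3) * E t := by
    rw [step (p' := fun t => c ^ 2 * (2 * t)) fun t =>
      (((hasDerivAt_pow 2 t).const_mul (c ^ 2)).const_add c).congr_deriv (by ring)]
    ext t; ring
  have d4 : deriv (fun t => (3 * c ^ 2 * t + c ^ 3 * t ^ 3) * E t) 0 = 3 * c ^ 2 := by
    rw [step (p' := fun t => 3 * c ^ 2 + c ^ 3 * (3 * t ^ 2)) fun t =>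
      (((hasDerivAt_id' t).const_mul _).fun_add ((hasDerivAt_pow 3 t).const_mul _)).congr_deriv
        (by ring)]
    simp [E]
  simp only [iteratedDeriv_succ', iteratedDeriv_zero, d1, d2, d3, d4]

lemma integral_pow_four_gaussianReal (v : ℝ≥0) :
    ∫ x, x ^ 4 ∂gaussianReal 0 v = 3 * (v : ℝ) ^ 2 := by
  have h := iteratedDeriv_mgf_zero (X := fun x : ℝ => x) (μ := gaussianReal 0 v) (by simp) 4
  rw [mgf_fun_id_gaussianReal] at h
  simpa [iteratedDeriv_four_exp_mul_sq_div_two_zero] using h.symm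

lemma integral_sq_gaussianReal (v : ℝ≥0) : ∫ x, x ^ 2 ∂gaussianReal 0 v = v := by
  rw [← variance_fun_id_gaussianReal (μ := 0),
    variance_of_integral_eq_zero aemeasurable_id' (by simp)]

lemma MemLp.integrable_pow {α : Type*} [MeasurableSpace α] {μ : Measure α} {f : α → ℝ} {n : ℕ}
    (hf : MemLp f n μ) (hn : n ≠ 0) : Integrable (fun x => f x ^ n) μ :=
  (hf.integrable_norm_pow hn).mono' (hf.1.pow n) (ae_of_all _ fun x => (norm_pow (f x) n).le)

section GaussianLaw

variable {Ω : Type*} [MeasurableSpace Ω] {μ : Measure Ω} {Y : Ω → ℝ} {v : ℝ≥0}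

lemma aemeasurable_of_map_eq_gaussianReal (hY : μ.map Y = gaussianReal 0 v) : AEMeasurable Y μ :=
  AEMeasurable.of_map_ne_zero (hY ▸ IsProbabilityMeasure.ne_zero _)

lemma memLp_of_map_eq_gaussianReal (hY : μ.map Y = gaussianReal 0 v) {p : ℝ≥0∞} (hp : p ≠ ∞) :
    MemLp Y p μ := by
  have hY' := aemeasurable_of_map_eq_gaussianReal hY
  rw [← Function.id_comp Y, ← memLp_map_measure_iff aestronglyMeasurable_id hY', hY]
  exact memLp_id_gaussianReal' p hp

lemma integral_pow_four_of_map_eq_gaussianReal (hY : μ.map Y = gaussianReal 0 v) :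
    ∫ ω, Y ω ^ 4 ∂μ = 3 * (∫ ω, Y ω ^ 2 ∂μ) ^ 2 := by
  have hY' := aemeasurable_of_map_eq_gaussianReal hY
  rw [← integral_map (f := fun x => x ^ 4) hY' (by fun_prop),
    ← integral_map (f := fun x => x ^ 2) hY' (by fun_prop), hY,
    integral_pow_four_gaussianReal, integral_sq_gaussianReal]

end GaussianLaw

section Polarization

variable {Ω : Type*} [MeasurableSpace Ω] {μ : Measure Ω}

lemma integral_sq_mul_sq_of_integral_pow_four [IsFiniteMeasure μ] {Y Z : Ω → ℝ}
    (hY : MemLp Y 4 μ) (hZ : MemLp Z 4 μ)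
    (h : ∀ a b : ℝ, ∫ ω, (a * Y ω + b * Z ω) ^ 4 ∂μ = 3 * (∫ ω, (a * Y ω + b * Z ω) ^ 2 ∂μ) ^ 2) :
    ∫ ω, Y ω ^ 2 * Z ω ^ 2 ∂μ
      = (∫ ω, Y ω ^ 2 ∂μ) * (∫ ω, Z ω ^ 2 ∂μ) + 2 * (∫ ω, Y ω * Z ω ∂μ) ^ 2 := by
  have hY2 : MemLp Y 2 μ := hY.mono_exponent (by norm_num)
  have hZ2 : MemLp Z 2 μ := hZ.mono_exponent (by norm_num)
  have hsq : ∀ a b : ℝ, ∫ ω, (a * Y ω + b * Z ω) ^ 2 ∂μ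
      = a ^ 2 * ∫ ω, Y ω ^ 2 ∂μ + 2 * a * b * ∫ ω, Y ω * Z ω ∂μ + b ^ 2 * ∫ ω, Z ω ^ 2 ∂μ := by
    intro a b
    have hexp : ∀ ω, (a * Y ω + b * Z ω) ^ 2
        = a ^ 2 * Y ω ^ 2 + 2 * a * b * (Y ω * Z ω) + b ^ 2 * Z ω ^ 2 := fun ω => by ring
    have hYZ : Integrable (fun ω => Y ω * Z ω) μ := hY2.integrable_mul hZ2
    simp_rw [hexp]
    rw [integral_add ((hY2.integrable_sq.const_mul _).fun_add (hYZ.const_mul _))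
        (hZ2.integrable_sq.const_mul _), integral_add (hY2.integrable_sq.const_mul _)
        (hYZ.const_mul _), integral_const_mul, integral_const_mul, integral_const_mul]
  have hint : ∀ a b : ℝ, Integrable (fun ω => (a * Y ω + b * Z ω) ^ 4) μ := fun a b =>
    MemLp.integrable_pow (n := 4) ((hY.const_mul a).add (hZ.const_mul b)) (by norm_num)
  have hpol : ∀ ω, Y ω ^ 2 * Z ω ^ 2 = ((1 * Y ω + 1 * Z ω) ^ 4 + (1 * Y ω + -1 * Z ω) ^ 4
      - 2 * (1 * Y ω + 0 * Z ω) ^ 4 - 2 * (0 * Y ω + 1 * Z ω) ^ 4) / 12 := fun ω => by ring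
  simp_rw [hpol]
  rw [integral_div, integral_sub (((hint 1 1).fun_add (hint 1 (-1))).sub' ((hint 1 0).const_mul 2))
      ((hint 0 1).const_mul 2),
    integral_sub ((hint 1 1).fun_add (hint 1 (-1))) ((hint 1 0).const_mul 2),
    integral_add (hint 1 1) (hint 1 (-1)), integral_const_mul, integral_const_mul,
    h, h, h, h, hsq, hsq, hsq, hsq]
  ring

end Polarization

namespace IsJointlyGaussianCentered

variable {Ω : Type*} [MeasurableSpace Ω] {μ : Measure Ω} {S : Type*} {X : S → Ω → ℝ}

lemma exists_map_add_eq_gaussianReal (hX : IsJointlyGaussianCentered μ X) (s t : S) (a b : ℝ) :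
    ∃ v : ℝ≥0, μ.map (fun ω => a * X s ω + b * X t ω) = gaussianReal 0 v := by
  classical
  obtain ⟨v, hv⟩ := hX {s, t} (Pi.single s a + Pi.single t b)
  refine ⟨v, Eq.trans ?_ hv⟩
  congr 1
  ext ω
  simp [Pi.single_apply, add_mul, Finset.sum_add_distrib, ite_mul]

lemma memLp (hX : IsJointlyGaussianCentered μ X) (s : S) {p : ℝ≥0∞} (hp : p ≠ ∞) :
    MemLp (X s) p μ := by
  obtain ⟨v, hv⟩ := hX.exists_map_add_eq_gaussianReal s s 1 0
  simpa using memLp_of_map_eq_gaussianReal hv hp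

lemma memLp_sq (hX : IsJointlyGaussianCentered μ X) (s : S) :
    MemLp (fun ω => X s ω ^ 2) 2 μ := by
  have h4 := MemLp.integrable_pow (n := 4) (hX.memLp s (by simp)) (by norm_num)
  refine (memLp_two_iff_integrable_sq ((hX.memLp s (p := 2) (by simp)).1.pow 2)).2 ?_
  simpa [← pow_mul] using h4

lemma integral_sq_mul_sq [IsFiniteMeasure μ] (hX : IsJointlyGaussianCentered μ X) (s t : S) :
    ∫ ω, X s ω ^ 2 * X t ω ^ 2 ∂μ
      = (∫ ω, X s ω ^ 2 ∂μ) * (∫ ω, X t ω ^ 2 ∂μ) + 2 * (∫ ω, X s ω * X t ω ∂μ) ^ 2 :=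
  integral_sq_mul_sq_of_integral_pow_four (hX.memLp s (by simp)) (hX.memLp t (by simp))
    fun a b => (hX.exists_map_add_eq_gaussianReal s t a b).elim fun _ hv =>
      integral_pow_four_of_map_eq_gaussianReal hv

lemma covariance_sq_sq [IsProbabilityMeasure μ] (hX : IsJointlyGaussianCentered μ X) (s t : S) :
    cov[fun ω => X s ω ^ 2, fun ω => X t ω ^ 2; μ] = 2 * (∫ ω, X s ω * X t ω ∂μ) ^ 2 := by
  rw [covariance_eq_sub (hX.memLp_sq s) (hX.memLp_sq t)]
  simp only [Pi.mul_apply, hX.integral_sq_mul_sq s t]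
  ring

end IsJointlyGaussianCentered

theorem variance_of_gaussian_quadratic_form_general
    {Ω : Type*} [MeasurableSpace Ω] (μ : Measure Ω) [IsProbabilityMeasure μ]
    {S : Type*} [Fintype S] (X : S → Ω → ℝ)
    (hX : IsJointlyGaussianCentered μ X)
    (a : S → ℝ) :
    ProbabilityTheory.variance (fun x => ∑ s, a s * (X s x) ^ 2) μ =
      2 * ∑ s, ∑ t, a s * a t * (∫ x, X s x * X t x ∂μ) ^ 2 := by
  calc Var[fun x => ∑ s, a s * X s x ^ 2; μ]
      = ∑ s, ∑ t, cov[fun x => a s * X s x ^ 2, fun x => a t * X t x ^ 2; μ] :=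
        variance_fun_sum fun s => (hX.memLp_sq s).const_mul (a s)
    _ = ∑ s, ∑ t, a s * a t * cov[fun x => X s x ^ 2, fun x => X t x ^ 2; μ] := by
        refine Finset.sum_congr rfl fun s _ => Finset.sum_congr rfl fun t _ => ?_
        rw [covariance_const_mul_left, covariance_const_mul_right]
        ring
    _ = 2 * ∑ s, ∑ t, a s * a t * (∫ x, X s x * X t x ∂μ) ^ 2 := by
        simp only [hX.covariance_sq_sq, Finset.mul_sum]
        ring_nf

/-- Isserlis-type variance formula for quadratic forms of a jointly
Gaussian centered finite family. -/
theorem variance_of_gaussian_quadratic_form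
    {Ω : Type*} [MeasurableSpace Ω] (μ : Measure Ω) [IsProbabilityMeasure μ]
    {S : Type*} [Fintype S] [Nonempty S] (X : S → Ω → ℝ)
    (hX : IsJointlyGaussianCentered μ X)
    (hX2 : ∀ s, MemLp (X s) 2 μ)
    (a : S → ℝ) :
    ProbabilityTheory.variance (fun x => ∑ s, a s * (X s x) ^ 2) μ =
      2 * ∑ s, ∑ t, a s * a t * (∫ x, X s x * X t x ∂μ) ^ 2 :=
  variance_of_gaussian_quadratic_form_general μ X hX a

end DSW
end
end
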